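/- Let p_1,…,p_h be prime ideals of O_K with k ≤ h, and let 𝒜 be a set of non-zero integral ideals. Let b* range over the p_1,…,p_h-ideals that are multiples of some member of 𝒜 but are not multiples of any p_1,…,p_k-ideal belonging to 𝒜. Then Σ_{b*} 1/N(b*) = Π_h (B_h - B_k), where Π_j = Π_{i=1}^j (1-1/N(p_i))^{-1} and B_j = Π_j^{-1} Σ 1/N(b') with b' ranging over p_1,…,p_j-ideals that are multiples of some member of 𝒜. -/

import Mathlib

open Filter Topology NumberField Asymptotics

/-- Number of non-zero integral ideals of `𝓞 K` with absolute norm at most `x`. -/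
noncomputable def idealCount (K : Type*) [Field K] [NumberField K] (x : ℕ) : ℕ :=
  Nat.card {I : Ideal (𝓞 K) // I ≠ ⊥ ∧ Ideal.absNorm I ≤ x}

/-- Number of ideals in `S` (necessarily non-zero) with absolute norm at most `x`. -/
noncomputable def setCount (K : Type*) [Field K] [NumberField K]
    (S : Set (Ideal (𝓞 K))) (x : ℕ) : ℕ :=
  Nat.card {I : Ideal (𝓞 K) // I ∈ S ∧ I ≠ ⊥ ∧ Ideal.absNorm I ≤ x}

/-- Sum of reciprocal norms `∑_{b ∈ S, N b ≤ x} 1 / N b` over non-zero ideals of `S`. -/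
noncomputable def partialSum (K : Type*) [Field K] [NumberField K]
    (S : Set (Ideal (𝓞 K))) (x : ℕ) : ℝ :=
  ∑ k ∈ Finset.Icc 1 x,
    (Nat.card {I : Ideal (𝓞 K) // I ∈ S ∧ Ideal.absNorm I = k} : ℝ) / k

/-- A non-zero integral ideal all of whose prime factors lie in the set `P`. -/
def IsSmoothIdeal (K : Type*) [Field K] [NumberField K]
    (P : Set (Ideal (𝓞 K))) (n : Ideal (𝓞 K)) : Prop :=
  n ≠ ⊥ ∧ ∀ q : Ideal (𝓞 K), q.IsPrime → q ≠ ⊥ → n ≤ q → q ∈ P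

/-- `B_k = Π_k⁻¹ · ∑ 1/N(b′)`, the sum ranging over the `p_0,…,p_{k-1}`-ideals that are
multiples of some member of `𝒜`, where `Π_k = ∏_{i<k} (1 - 1/N(p_i))⁻¹`. -/
noncomputable def multB (K : Type*) [Field K] [NumberField K]
    (𝒜 : Set (Ideal (𝓞 K))) (p : ℕ → Ideal (𝓞 K)) (k : ℕ) : ℝ :=
  (∏ i ∈ Finset.range k, (1 - ((Ideal.absNorm (p i) : ℝ))⁻¹)⁻¹)⁻¹ *
    ∑' b : {b : Ideal (𝓞 K) //
        IsSmoothIdeal K (p '' Set.Iio k) b ∧ ∃ a ∈ 𝒜, b ≤ a},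
      ((Ideal.absNorm (b : Ideal (𝓞 K)) : ℝ))⁻¹

/-! Every `p_1,…,p_h`-ideal factors uniquely as its `p_1,…,p_k`-part times its
`p_{k+1},…,p_h`-part, and these two parts are coprime. Hence such an ideal is a multiple of a
`p_1,…,p_k`-ideal `a ∈ 𝒜` exactly when its `p_1,…,p_k`-part is, so by the Euler product for
`p_{k+1},…,p_h` the reciprocal norms of these "first class" ideals sum to `Π_k B_k · Π_h / Π_k`.
The second class is the complement of the first class among the `p_1,…,p_h`-ideals that are
multiples of a member of `𝒜`, whose reciprocal norms sum to `Π_h B_h`. -/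

open UniqueFactorizationMonoid

theorem HasSum.subtype_sdiff {β α : Type*} [AddCommGroup α] [TopologicalSpace α]
    [IsTopologicalAddGroup α] {f : β → α} {s t : Set β} {a b : α} (hts : t ⊆ s)
    (hs : HasSum (fun x : s => f x) a) (ht : HasSum (fun x : t => f x) b) :
    HasSum (fun x : ↥(s \ t) => f x) (a - b) := by
  refine hasSum_subtype_iff_indicator.mpr ?_
  rw [Set.indicator_sdiff hts]
  exact (hasSum_subtype_iff_indicator.mp hs).sub (hasSum_subtype_iff_indicator.mp ht)

section SmoothIdeals

variable {K : Type*} [Field K] [NumberField K] {P Q : Set (Ideal (𝓞 K))}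
  {a b c q : Ideal (𝓞 K)}

theorem isSmoothIdeal_iff :
    IsSmoothIdeal K P b ↔ b ≠ 0 ∧ ∀ q : Ideal (𝓞 K), Prime q → q ∣ b → q ∈ P := by
  rw [IsSmoothIdeal, Submodule.zero_eq_bot]
  refine and_congr Iff.rfl ⟨fun H q hq hdvd => ?_, fun H q hq hq0 hle => ?_⟩
  · exact H q (Ideal.isPrime_of_prime hq) hq.ne_zero (Ideal.le_of_dvd hdvd)
  · exact H q (Ideal.prime_of_isPrime hq0 hq) (Ideal.dvd_iff_le.mpr hle)

namespace IsSmoothIdeal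

theorem ne_zero (hb : IsSmoothIdeal K P b) : b ≠ 0 := (isSmoothIdeal_iff.mp hb).1

theorem mul (hb : IsSmoothIdeal K P b) (hc : IsSmoothIdeal K Q c) :
    IsSmoothIdeal K (P ∪ Q) (b * c) := by
  rw [isSmoothIdeal_iff] at hb hc ⊢
  refine ⟨mul_ne_zero hb.1 hc.1, fun q hq hdvd => ?_⟩
  rcases hq.dvd_mul.mp hdvd with hqb | hqc
  exacts [Or.inl (hb.2 q hq hqb), Or.inr (hc.2 q hq hqc)]

theorem of_dvd (hb : IsSmoothIdeal K P b) (hab : a ∣ b) : IsSmoothIdeal K P a := by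
  rw [isSmoothIdeal_iff] at hb ⊢
  exact ⟨fun ha => hb.1 (zero_dvd_iff.mp (ha ▸ hab)), fun q hq hqa => hb.2 q hq (hqa.trans hab)⟩

theorem isRelPrime (hPQ : Disjoint P Q) (hb : IsSmoothIdeal K P b) (hc : IsSmoothIdeal K Q c) :
    IsRelPrime b c := by
  intro d hdb hdc
  by_contra hd
  obtain ⟨r, hr⟩ := exists_mem_factors (hb.of_dvd hdb).ne_zero hd
  have hrd := dvd_of_mem_factors hr
  have hrp := prime_of_factor r hr
  exact Set.disjoint_left.mp hPQ ((isSmoothIdeal_iff.mp hb).2 r hrp (hrd.trans hdb))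
    ((isSmoothIdeal_iff.mp hc).2 r hrp (hrd.trans hdc))

theorem mul_eq_mul_iff {b' c' : Ideal (𝓞 K)} (hPQ : Disjoint P Q)
    (hb : IsSmoothIdeal K P b) (hc : IsSmoothIdeal K Q c)
    (hb' : IsSmoothIdeal K P b') (hc' : IsSmoothIdeal K Q c') :
    b * c = b' * c' ↔ b = b' ∧ c = c' := by
  refine ⟨fun h => ?_, fun ⟨rfl, rfl⟩ => rfl⟩
  have hbb' : b ∣ b' := (isRelPrime hPQ hb hc').dvd_of_dvd_mul_right (h ▸ dvd_mul_right b c)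
  have hb'b : b' ∣ b := (isRelPrime hPQ hb' hc).dvd_of_dvd_mul_right (h ▸ dvd_mul_right b' c')
  obtain rfl : b = b' := associated_iff_eq.mp (associated_of_dvd_dvd hbb' hb'b)
  exact ⟨rfl, mul_left_cancel₀ hb.ne_zero h⟩

theorem multiset_prod {t : Multiset (Ideal (𝓞 K))} (ht : ∀ r ∈ t, Prime r ∧ r ∈ P) :
    IsSmoothIdeal K P t.prod := by
  rw [isSmoothIdeal_iff]
  refine ⟨Multiset.prod_ne_zero fun h0 => (ht 0 h0).1.ne_zero rfl, fun q hq hdvd => ?_⟩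
  obtain ⟨r, hrt, hqr⟩ := hq.exists_mem_multiset_dvd hdvd
  obtain rfl : q = r := associated_iff_eq.mp (hq.associated_of_dvd (ht r hrt).1 hqr)
  exact (ht q hrt).2

theorem exists_mul_eq_of_union (hb : IsSmoothIdeal K (P ∪ Q) b) :
    ∃ b₁ c, IsSmoothIdeal K P b₁ ∧ IsSmoothIdeal K Q c ∧ b₁ * c = b := by
  classical
  obtain ⟨hb0, hbPQ⟩ := isSmoothIdeal_iff.mp hb
  have hprime {r} (hr : r ∈ normalizedFactors b) := prime_of_normalized_factor r hr
  refine ⟨((normalizedFactors b).filter (· ∈ P)).prod,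
    ((normalizedFactors b).filter (· ∉ P)).prod, multiset_prod fun r hr => ?_,
    multiset_prod fun r hr => ?_, ?_⟩
  · rw [Multiset.mem_filter] at hr
    exact ⟨hprime hr.1, hr.2⟩
  · rw [Multiset.mem_filter] at hr
    exact ⟨hprime hr.1,
      (hbPQ r (hprime hr.1) (dvd_of_mem_normalizedFactors hr.1)).resolve_left hr.2⟩
  · rw [Multiset.prod_filter_mul_prod_filter_not]
    exact associated_iff_eq.mp (prod_normalizedFactors hb0)

end IsSmoothIdeal

theorem isSmoothIdeal_empty_iff : IsSmoothIdeal K ∅ b ↔ b = 1 := by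
  rw [isSmoothIdeal_iff]
  refine ⟨fun ⟨hb0, hb⟩ => ?_, ?_⟩
  · by_contra hb1
    obtain ⟨r, hr⟩ := exists_mem_factors hb0 (by rwa [Ideal.isUnit_iff, ← Ideal.one_eq_top])
    exact hb r (prime_of_factor r hr) (dvd_of_mem_factors hr)
  · rintro rfl
    exact ⟨one_ne_zero, fun q hq hdvd => absurd (isUnit_of_dvd_one hdvd) hq.not_isUnit⟩

theorem isSmoothIdeal_singleton_iff (hq : Prime q) :
    IsSmoothIdeal K {q} b ↔ ∃ n : ℕ, q ^ n = b := by
  rw [isSmoothIdeal_iff]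
  constructor
  · rintro ⟨hb0, hb⟩
    obtain ⟨n, hn⟩ := exists_associated_prime_pow_of_unique_normalized_factor
      (fun hr => hb _ (prime_of_normalized_factor _ hr) (dvd_of_mem_normalizedFactors hr)) hb0
    exact ⟨n, associated_iff_eq.mp hn⟩
  · rintro ⟨n, rfl⟩
    exact ⟨pow_ne_zero n hq.ne_zero, fun r hr hdvd =>
      associated_iff_eq.mp (hr.associated_of_dvd hq (hr.dvd_of_dvd_pow hdvd))⟩

end SmoothIdeals

section EulerProducts

variable {K : Type*} [Field K] [NumberField K]

noncomputable abbrev invNorm (I : Ideal (𝓞 K)) : ℝ := (Ideal.absNorm I : ℝ)⁻¹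

theorem invNorm_mul (I J : Ideal (𝓞 K)) : invNorm (I * J) = invNorm I * invNorm J := by
  simp only [invNorm, map_mul, Nat.cast_mul, mul_inv]

theorem one_lt_absNorm_of_prime {q : Ideal (𝓞 K)} (hq : Prime q) : 1 < Ideal.absNorm q := by
  have h0 : Ideal.absNorm q ≠ 0 := Ideal.absNorm_eq_zero_iff.not.mpr hq.ne_zero
  have h1 : Ideal.absNorm q ≠ 1 :=
    Ideal.absNorm_eq_one_iff.not.mpr fun h => hq.not_isUnit (Ideal.isUnit_iff.mpr h)
  omega

theorem invNorm_lt_one_of_prime {q : Ideal (𝓞 K)} (hq : Prime q) : invNorm q < 1 :=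
  inv_lt_one_of_one_lt₀ (mod_cast one_lt_absNorm_of_prime hq)

theorem hasSum_invNorm_of_mul_bijective {P Q S T U : Set (Ideal (𝓞 K))} {x y : ℝ}
    (hPQ : Disjoint P Q)
    (hS : ∀ b ∈ S, IsSmoothIdeal K P b) (hT : ∀ c ∈ T, IsSmoothIdeal K Q c)
    (hmul : ∀ b ∈ S, ∀ c ∈ T, b * c ∈ U) (hsplit : ∀ u ∈ U, ∃ b ∈ S, ∃ c ∈ T, b * c = u)
    (hx : HasSum (fun b : S => invNorm (b : Ideal (𝓞 K))) x)
    (hy : HasSum (fun c : T => invNorm (c : Ideal (𝓞 K))) y) :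
    HasSum (fun u : U => invNorm (u : Ideal (𝓞 K))) (x * y) := by
  let e : S × T → U := fun z => ⟨z.1 * z.2, hmul _ z.1.2 _ z.2.2⟩
  have he : Function.Bijective e := by
    refine ⟨fun ⟨⟨b, hb⟩, ⟨c, hc⟩⟩ ⟨⟨b', hb'⟩, ⟨c', hc'⟩⟩ h => ?_, fun ⟨u, hu⟩ => ?_⟩
    · obtain ⟨rfl, rfl⟩ := (IsSmoothIdeal.mul_eq_mul_iff hPQ (hS b hb) (hT c hc) (hS b' hb')
        (hT c' hc')).mp (congrArg Subtype.val h)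
      rfl
    · obtain ⟨b, hb, c, hc, rfl⟩ := hsplit u hu
      exact ⟨(⟨b, hb⟩, ⟨c, hc⟩), rfl⟩
  refine (Equiv.ofBijective e he).hasSum_iff.mp ?_
  simpa only [Function.comp_def, Equiv.ofBijective_apply, e, invNorm_mul] using
    hx.mul hy (hx.summable.mul_of_nonneg hy.summable (fun _ => by positivity)
      fun _ => by positivity)

theorem hasSum_invNorm_isSmoothIdeal_singleton {q : Ideal (𝓞 K)} (hq : Prime q) :
    HasSum (fun b : {b | IsSmoothIdeal K {q} b} => invNorm (b : Ideal (𝓞 K)))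
      (1 - invNorm q)⁻¹ := by
  have hrange : {b | IsSmoothIdeal K {q} b} = Set.range (q ^ · : ℕ → Ideal (𝓞 K)) := by
    ext b
    exact isSmoothIdeal_singleton_iff hq
  rw [hrange, (pow_injective_of_not_isUnit hq.not_isUnit hq.ne_zero).hasSum_range_iff]
  simpa only [Function.comp_def, invNorm, map_pow, Nat.cast_pow, inv_pow] using
    hasSum_geometric_of_lt_one (by positivity) (invNorm_lt_one_of_prime hq)

theorem hasSum_invNorm_isSmoothIdeal_empty :
    HasSum (fun b : {b | IsSmoothIdeal K ∅ b} => invNorm (b : Ideal (𝓞 K))) 1 := by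
  have hone : {b | IsSmoothIdeal K ∅ b} = Set.range (fun _ : Unit => (1 : Ideal (𝓞 K))) := by
    ext b
    simp [isSmoothIdeal_empty_iff]
  rw [hone, Function.injective_of_subsingleton _ |>.hasSum_range_iff]
  simpa only [Function.comp_def, invNorm, map_one, Nat.cast_one, inv_one] using
    hasSum_unique (fun _ : Unit => (1 : ℝ))

theorem hasSum_invNorm_isSmoothIdeal (P : Finset (Ideal (𝓞 K))) (hP : ∀ q ∈ P, Prime q) :
    HasSum (fun b : {b | IsSmoothIdeal K P b} => invNorm (b : Ideal (𝓞 K)))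
      (∏ q ∈ P, (1 - invNorm q)⁻¹) := by
  classical
  induction P using Finset.induction_on with
  | empty =>
    rw [Finset.prod_empty, Finset.coe_empty]
    exact hasSum_invNorm_isSmoothIdeal_empty
  | @insert q P hq ih =>
    rw [Finset.prod_insert hq, Finset.coe_insert, Set.insert_eq]
    have hqP : Prime q := hP q (Finset.mem_insert_self q P)
    exact hasSum_invNorm_of_mul_bijective (S := {b | IsSmoothIdeal K {q} b})
      (T := {b | IsSmoothIdeal K P b}) (Set.disjoint_singleton_left.mpr hq)
      (fun _ hb => hb) (fun _ hc => hc) (fun _ hb _ hc => hb.mul hc)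
      (fun _ hu => by
        obtain ⟨b, c, hb, hc, rfl⟩ := hu.exists_mul_eq_of_union
        exact ⟨b, hb, c, hc, rfl⟩)
      (hasSum_invNorm_isSmoothIdeal_singleton hqP)
      (ih fun r hr => hP r (Finset.mem_insert_of_mem hr))

theorem hasSum_invNorm_isSmoothIdeal_image {ι : Type*} {p : ι → Ideal (𝓞 K)}
    (hinj : Function.Injective p) (s : Finset ι) (hp : ∀ i ∈ s, Prime (p i)) :
    HasSum (fun b : {b | IsSmoothIdeal K (p '' s) b} => invNorm (b : Ideal (𝓞 K)))
      (∏ i ∈ s, (1 - invNorm (p i))⁻¹) := by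
  classical
  rw [← Finset.coe_image, ← Finset.prod_image (f := fun q => (1 - invNorm q)⁻¹) hinj.injOn]
  exact hasSum_invNorm_isSmoothIdeal _ (by simpa using hp)

end EulerProducts

section Classes

variable {K : Type*} [Field K] [NumberField K]

def smoothMultiples (P 𝒜 : Set (Ideal (𝓞 K))) : Set (Ideal (𝓞 K)) :=
  {b | IsSmoothIdeal K P b ∧ ∃ a ∈ 𝒜, b ≤ a}

theorem smoothMultiples_mono {P 𝒜 𝒜' : Set (Ideal (𝓞 K))} (h : 𝒜' ⊆ 𝒜) :
    smoothMultiples P 𝒜' ⊆ smoothMultiples P 𝒜 :=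
  fun _ ⟨hb, a, ha, hba⟩ => ⟨hb, a, h ha, hba⟩

variable {P Q R 𝒜 : Set (Ideal (𝓞 K))} {x y z : ℝ}

/-- A `P ∪ Q`-ideal is a multiple of a `P`-ideal `a` iff its `P`-part is, since its `Q`-part is
coprime to `a`. -/
theorem hasSum_invNorm_smoothMultiples_union (hPQ : Disjoint P Q)
    (hx : HasSum (fun b : smoothMultiples P 𝒜 => invNorm (b : Ideal (𝓞 K))) x)
    (hy : HasSum (fun c : {c | IsSmoothIdeal K Q c} => invNorm (c : Ideal (𝓞 K))) y) :
    HasSum (fun b : smoothMultiples (P ∪ Q) {a ∈ 𝒜 | IsSmoothIdeal K P a} =>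
      invNorm (b : Ideal (𝓞 K))) (x * y) := by
  refine hasSum_invNorm_of_mul_bijective hPQ (fun b hb => hb.1) (fun c hc => hc) ?_ ?_ hx hy
  · rintro b ⟨hb, a, ha, hba⟩ c hc
    have hab : a ∣ b := Ideal.dvd_iff_le.mpr hba
    exact ⟨hb.mul hc, a, ⟨ha, hb.of_dvd hab⟩, Ideal.le_of_dvd (hab.mul_right c)⟩
  · rintro u ⟨hu, a, ⟨ha, haP⟩, hua⟩
    obtain ⟨b, c, hb, hc, rfl⟩ := hu.exists_mul_eq_of_union
    have hab : a ∣ b :=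
      (haP.isRelPrime hPQ hc).dvd_of_dvd_mul_right (Ideal.dvd_iff_le.mpr hua)
    exact ⟨b, ⟨hb, a, ha, Ideal.le_of_dvd hab⟩, c, hc, rfl⟩

theorem hasSum_invNorm_second_class (hPQ : Disjoint P Q) (hPQR : P ∪ Q = R)
    (hz : HasSum (fun b : smoothMultiples R 𝒜 => invNorm (b : Ideal (𝓞 K))) z)
    (hx : HasSum (fun b : smoothMultiples P 𝒜 => invNorm (b : Ideal (𝓞 K))) x)
    (hy : HasSum (fun c : {c | IsSmoothIdeal K Q c} => invNorm (c : Ideal (𝓞 K))) y) :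
    HasSum (fun b : {b : Ideal (𝓞 K) // IsSmoothIdeal K R b ∧ (∃ a ∈ 𝒜, b ≤ a) ∧
        ¬∃ a ∈ 𝒜, IsSmoothIdeal K P a ∧ b ≤ a} => invNorm (b : Ideal (𝓞 K))) (z - x * y) := by
  subst hPQR
  refine (Equiv.subtypeEquivRight fun b => ?_).hasSum_iff.mpr
    (hz.subtype_sdiff (f := invNorm) (smoothMultiples_mono (Set.sep_subset _ _))
      (hasSum_invNorm_smoothMultiples_union hPQ hx hy))
  exact ⟨fun ⟨hb, hm, hf⟩ => ⟨⟨hb, hm⟩, fun ⟨_, a, ⟨ha, haP⟩, hba⟩ => hf ⟨a, ha, haP, hba⟩⟩,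
    fun ⟨⟨hb, hm⟩, hf⟩ => ⟨hb, hm, fun ⟨a, ha, haP, hba⟩ => hf ⟨hb, a, ⟨ha, haP⟩, hba⟩⟩⟩

theorem multB_eq_tsum_smoothMultiples (𝒜 : Set (Ideal (𝓞 K))) (p : ℕ → Ideal (𝓞 K)) (k : ℕ) :
    multB K 𝒜 p k = (∏ i ∈ Finset.range k, (1 - invNorm (p i))⁻¹)⁻¹ *
      ∑' b : smoothMultiples (p '' Set.Iio k) 𝒜, invNorm (b : Ideal (𝓞 K)) :=
  rfl

end Classes

theorem hasSum_second_class_general (K : Type*) [Field K] [NumberField K]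
    (𝒜 : Set (Ideal (𝓞 K)))
    (p : ℕ → Ideal (𝓞 K)) (hp : ∀ n, (p n).IsPrime) (hp0 : ∀ n, p n ≠ ⊥)
    (hinj : Function.Injective p)
    (k h : ℕ) (hkh : k ≤ h) :
    HasSum (fun b : {b : Ideal (𝓞 K) //
          IsSmoothIdeal K (p '' Set.Iio h) b ∧ (∃ a ∈ 𝒜, b ≤ a) ∧
            ¬∃ a ∈ 𝒜, IsSmoothIdeal K (p '' Set.Iio k) a ∧ b ≤ a} =>
        ((Ideal.absNorm (b : Ideal (𝓞 K)) : ℝ))⁻¹)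
      ((∏ i ∈ Finset.range h, (1 - ((Ideal.absNorm (p i) : ℝ))⁻¹)⁻¹) *
        (multB K 𝒜 p h - multB K 𝒜 p k)) := by
  have hprime (n : ℕ) : Prime (p n) := Ideal.prime_of_isPrime (hp0 n) (hp n)
  have heuler (s : Finset ℕ) := hasSum_invNorm_isSmoothIdeal_image hinj s fun i _ => hprime i
  have hmultiples (j : ℕ) : HasSum (fun b : smoothMultiples (p '' Set.Iio j) 𝒜 =>
      invNorm (b : Ideal (𝓞 K))) (∑' b : smoothMultiples (p '' Set.Iio j) 𝒜, invNorm b.1) := by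
    have hsmooth := heuler (Finset.range j)
    rw [Finset.coe_range] at hsmooth
    exact (hsmooth.summable.comp_injective (Set.inclusion_injective fun _ hb => hb.1)).hasSum
  have hdisj : Disjoint (p '' Set.Iio k) (p '' Set.Ico k h) :=
    (Set.disjoint_image_iff hinj).mpr
      ((Set.Iio_disjoint_Ici le_rfl).mono_right Set.Ico_subset_Ici_self)
  have hunion : p '' Set.Iio k ∪ p '' Set.Ico k h = p '' Set.Iio h := by
    rw [← Set.image_union, Set.Iio_union_Ico_eq_Iio hkh]
  have hnonzero (s : Finset ℕ) : ∏ i ∈ s, (1 - invNorm (p i))⁻¹ ≠ 0 :=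
    Finset.prod_ne_zero_iff.mpr fun i _ =>
      inv_ne_zero (sub_pos.mpr (invNorm_lt_one_of_prime (hprime i))).ne'
  convert hasSum_invNorm_second_class hdisj hunion (hmultiples h) (hmultiples k)
    (Finset.coe_Ico k h ▸ heuler (Finset.Ico k h)) using 1
  have hA := hnonzero (Finset.range k)
  have hB := hnonzero (Finset.Ico k h)
  rw [multB_eq_tsum_smoothMultiples, multB_eq_tsum_smoothMultiples, ← Finset.prod_range_mul_prod_Ico _ hkh]
  generalize ∏ i ∈ Finset.range k, (1 - invNorm (p i))⁻¹ = A at hA ⊢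
  generalize ∏ i ∈ Finset.Ico k h, (1 - invNorm (p i))⁻¹ = B at hB ⊢
  field_simp

/-- the sum of `1/N(b*)` over the `p_1,…,p_h`-ideals that are multiples
of some member of `𝒜` but not multiples of any `p_1,…,p_k`-ideal of `𝒜` equals
`Π_h (B_h - B_k)`. -/
theorem hasSum_second_class (K : Type*) [Field K] [NumberField K]
    (𝒜 : Set (Ideal (𝓞 K))) (h𝒜 : ∀ a ∈ 𝒜, a ≠ ⊥)
    (p : ℕ → Ideal (𝓞 K)) (hp : ∀ n, (p n).IsPrime) (hp0 : ∀ n, p n ≠ ⊥)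
    (hinj : Function.Injective p)
    (k h : ℕ) (hkh : k ≤ h) :
    HasSum (fun b : {b : Ideal (𝓞 K) //
          IsSmoothIdeal K (p '' Set.Iio h) b ∧ (∃ a ∈ 𝒜, b ≤ a) ∧
            ¬∃ a ∈ 𝒜, IsSmoothIdeal K (p '' Set.Iio k) a ∧ b ≤ a} =>
        ((Ideal.absNorm (b : Ideal (𝓞 K)) : ℝ))⁻¹)
      ((∏ i ∈ Finset.range h, (1 - ((Ideal.absNorm (p i) : ℝ))⁻¹)⁻¹) *
        (multB K 𝒜 p h - multB K 𝒜 p k)) :=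
  hasSum_second_class_general K 𝒜 p hp hp0 hinj k h hkh
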